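/- arXiv:2506.18444 — 5 statements merged into one kernel-verified Lean document; each statement's English description precedes it below -/
import Mathlib

section
/- Let μ and ν be probability distributions on a finite set Ω and let 0 ≤ t ≤ 1/4. If (1-t)·ν(x) ≤ μ(x) ≤ (1+t)·ν(x) for every x ∈ Ω, then D_KL(μ ‖ ν) ≤ t²/ln 2. -/
/-!
`log y ≤ y - 1` bounds each term of the divergence by a term of the χ²-divergence:
`μ log (μ/ν) ≤ (μ - ν) + (μ - ν)²/ν`. The linear parts sum to `0`, and the ratio bound gives
`(μ - ν)² ≤ t² ν²`, so the natural-log divergence is at most `t²`; dividing by `log 2`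
converts it to bits.
-/

open Real Finset

lemma Real.mul_log_div_le_sub_add_sq_div {a b : ℝ} (ha : 0 ≤ a) (hb : 0 < b) :
    a * log (a / b) ≤ a - b + (a - b) ^ 2 / b := by
  rcases ha.eq_or_lt with rfl | ha
  · rw [zero_sub, neg_sq, sq, mul_div_cancel_right₀ _ hb.ne']
    simp
  calc a * log (a / b) ≤ a * (a / b - 1) :=
        mul_le_mul_of_nonneg_left (log_le_sub_one_of_pos (div_pos ha hb)) ha.le
    _ = a - b + (a - b) ^ 2 / b := by field_simp; ring

lemma Real.mul_log_div_le_of_mul_le_of_le_mul {a b t : ℝ} (ha : 0 ≤ a) (hb : 0 ≤ b)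
    (hlo : (1 - t) * b ≤ a) (hhi : a ≤ (1 + t) * b) :
    a * log (a / b) ≤ a - b + t ^ 2 * b := by
  rcases hb.eq_or_lt with rfl | hb
  · obtain rfl : a = 0 := le_antisymm (by simpa using hhi) ha
    simp
  have hsq : (a - b) ^ 2 ≤ (t * b) ^ 2 := sq_le_sq' (by linarith) (by linarith)
  calc a * log (a / b) ≤ a - b + (a - b) ^ 2 / b := mul_log_div_le_sub_add_sq_div ha hb
    _ ≤ a - b + t ^ 2 * b := by
        gcongr _ + ?_
        rw [div_le_iff₀ hb]
        linarith [mul_pow t b 2]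

lemma Real.sum_mul_log_div_le_sq_of_bounded_ratio {Ω : Type*} [Fintype Ω] {μ ν : Ω → ℝ} {t : ℝ}
    (hμ0 : ∀ x, 0 ≤ μ x) (hμ1 : ∑ x, μ x = 1) (hν0 : ∀ x, 0 ≤ ν x) (hν1 : ∑ x, ν x = 1)
    (hlo : ∀ x, (1 - t) * ν x ≤ μ x) (hhi : ∀ x, μ x ≤ (1 + t) * ν x) :
    ∑ x, μ x * log (μ x / ν x) ≤ t ^ 2 :=
  calc ∑ x, μ x * log (μ x / ν x) ≤ ∑ x, (μ x - ν x + t ^ 2 * ν x) :=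
        sum_le_sum fun x _ =>
          mul_log_div_le_of_mul_le_of_le_mul (hμ0 x) (hν0 x) (hlo x) (hhi x)
    _ = t ^ 2 := by
        rw [sum_add_distrib, sum_sub_distrib, ← mul_sum, hμ1, hν1]
        ring

theorem dkl_le_of_bounded_ratio_general {Ω : Type*} [Fintype Ω] (μ ν : Ω → ℝ) (t : ℝ)
    (hμ0 : ∀ x, 0 ≤ μ x) (hμ1 : ∑ x, μ x = 1)
    (hν0 : ∀ x, 0 ≤ ν x) (hν1 : ∑ x, ν x = 1)
    (hlo : ∀ x, (1 - t) * ν x ≤ μ x) (hhi : ∀ x, μ x ≤ (1 + t) * ν x) :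
    ∑ x, μ x * Real.logb 2 (μ x / ν x) ≤ t ^ 2 / Real.log 2 := by
  have hbits : ∑ x, μ x * logb 2 (μ x / ν x) = (∑ x, μ x * log (μ x / ν x)) / log 2 := by
    simp only [← log_div_log, sum_div, mul_div_assoc]
  rw [hbits]
  exact div_le_div_of_nonneg_right
    (sum_mul_log_div_le_sq_of_bounded_ratio hμ0 hμ1 hν0 hν1 hlo hhi) (log_nonneg one_le_two)

/-- If `(1-t)ν(x) ≤ μ(x) ≤ (1+t)ν(x)` pointwise with `0 ≤ t ≤ 1/4`, then
    `D_KL(μ ‖ ν) ≤ t² / ln 2` (KL divergence in bits). -/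
theorem dkl_le_of_bounded_ratio {Ω : Type*} [Fintype Ω] (μ ν : Ω → ℝ) (t : ℝ)
    (ht0 : 0 ≤ t) (ht1 : t ≤ 1/4)
    (hμ0 : ∀ x, 0 ≤ μ x) (hμ1 : ∑ x, μ x = 1)
    (hν0 : ∀ x, 0 ≤ ν x) (hν1 : ∑ x, ν x = 1)
    (hlo : ∀ x, (1 - t) * ν x ≤ μ x) (hhi : ∀ x, μ x ≤ (1 + t) * ν x) :
    ∑ x, μ x * Real.logb 2 (μ x / ν x) ≤ t ^ 2 / Real.log 2 :=
  dkl_le_of_bounded_ratio_general μ ν t hμ0 hμ1 hν0 hν1 hlo hhi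
end

section
/- Let μ and ν be probability distributions on a finite set Ω with the same support. Then Σ_{x∈Ω} (μ(x)-ν(x))²/(μ(x)+ν(x)) ≤ (D_KL(μ ‖ ν) + D_KL(ν ‖ μ)) · ln 2, where terms with μ(x)+ν(x)=0 are interpreted as 0. -/
/-! The inequality holds termwise. With `t = log (a / b)`, the two KL terms add up to
`(a - b) t`, and `log x ≤ x - 1` applied to `a / b` and `b / a` gives `b t ≤ a - b ≤ a t`;
the product of these two gaps shows `(a - b)² ≤ (a + b) (a - b) t`. -/

open Real Finset

lemma mul_log_div_add_mul_log_div (a b : ℝ) :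
    a * log (a / b) + b * log (b / a) = (a - b) * log (a / b) := by
  rw [← inv_div a b, log_inv]
  ring

lemma mul_log_div_le_sub {a b : ℝ} (ha : 0 < a) (hb : 0 < b) : b * log (a / b) ≤ a - b := by
  have := mul_le_mul_of_nonneg_left (log_le_sub_one_of_pos (div_pos ha hb)) hb.le
  rwa [mul_sub, mul_div_cancel₀ a hb.ne', mul_one] at this

lemma sub_sq_div_add_le_sub_mul_log_div {a b : ℝ} (ha : 0 < a) (hb : 0 < b) :
    (a - b) ^ 2 / (a + b) ≤ (a - b) * log (a / b) := by
  set t := log (a / b)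
  have hlower : b * t ≤ a - b := mul_log_div_le_sub ha hb
  have hupper : a - b ≤ a * t := by
    have := mul_log_div_le_sub hb ha
    rw [← inv_div a b, log_inv] at this
    linarith
  -- `(a + b) (a - b) t - (a - b)² = (a t - (a - b)) ((a - b) - b t) + a b t²`
  have key : (a - b) ^ 2 ≤ (a + b) * ((a - b) * t) := by
    nlinarith [mul_nonneg (sub_nonneg.2 hupper) (sub_nonneg.2 hlower),
      mul_nonneg (mul_nonneg ha.le hb.le) (sq_nonneg t)]
  rwa [div_le_iff₀' (add_pos ha hb)]

lemma sub_sq_div_add_le_mul_log_div_add_mul_log_div {a b : ℝ} (ha : 0 ≤ a) (hb : 0 ≤ b)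
    (hab : a = 0 ↔ b = 0) :
    (a - b) ^ 2 / (a + b) ≤ a * log (a / b) + b * log (b / a) := by
  rcases ha.eq_or_lt with rfl | ha
  · simp [hab.1 rfl]
  · have hb : 0 < b := hb.lt_of_ne fun h => ha.ne' (hab.2 h.symm)
    rw [mul_log_div_add_mul_log_div]
    exact sub_sq_div_add_le_sub_mul_log_div ha hb

theorem triangular_le_symm_dkl_general {Ω : Type*} [Fintype Ω] (μ ν : Ω → ℝ)
    (hμ0 : ∀ x, 0 ≤ μ x)
    (hν0 : ∀ x, 0 ≤ ν x)
    (hsupp : ∀ x, μ x = 0 ↔ ν x = 0) :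
    ∑ x, (μ x - ν x) ^ 2 / (μ x + ν x)
      ≤ (∑ x, μ x * Real.logb 2 (μ x / ν x) + ∑ x, ν x * Real.logb 2 (ν x / μ x))
          * Real.log 2 := by
  have hlog2 : log 2 ≠ 0 := (log_pos one_lt_two).ne'
  have hnats : (∑ x, μ x * logb 2 (μ x / ν x) + ∑ x, ν x * logb 2 (ν x / μ x)) * log 2
      = ∑ x, (μ x * log (μ x / ν x) + ν x * log (ν x / μ x)) := by
    simp only [add_mul, sum_mul, ← sum_add_distrib, mul_assoc, ← log_div_log,
      div_mul_cancel₀ _ hlog2]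
  rw [hnats]
  exact sum_le_sum fun x _ =>
    sub_sq_div_add_le_mul_log_div_add_mul_log_div (hμ0 x) (hν0 x) (hsupp x)

/-- The symmetric χ²-like (triangular) discrimination is bounded by
    `(D_KL(μ ‖ ν) + D_KL(ν ‖ μ)) · ln 2` (KL divergences in bits), for distributions
    with the same support.  (Terms with `μ(x)+ν(x)=0` are `0` by Lean's `x/0 = 0`.) -/
theorem triangular_le_symm_dkl {Ω : Type*} [Fintype Ω] (μ ν : Ω → ℝ)
    (hμ0 : ∀ x, 0 ≤ μ x) (hμ1 : ∑ x, μ x = 1)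
    (hν0 : ∀ x, 0 ≤ ν x) (hν1 : ∑ x, ν x = 1)
    (hsupp : ∀ x, μ x = 0 ↔ ν x = 0) :
    ∑ x, (μ x - ν x) ^ 2 / (μ x + ν x)
      ≤ (∑ x, μ x * Real.logb 2 (μ x / ν x) + ∑ x, ν x * Real.logb 2 (ν x / μ x))
          * Real.log 2 :=
  triangular_le_symm_dkl_general μ ν hμ0 hν0 hsupp
end

section
/- For n ≥ 1 and 0 < ε < 1/150, setting δ = √2·ε/√n, k_H = n/2 - √3·√n, k_L = n/2 - √6·√n, p_H = 2^{-n}(1+δ)^{k_H}(1-δ)^{n-k_H}, and p_L = 2^{-n}(1+δ)^{k_L}(1-δ)^{n-k_L}, it holds that (1-ε)·p_H > (1+ε)·p_L. -/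
/-!
Since `k_H - k_L = t := (√6 - √3)√n`, the ratio `p_H / p_L` equals `((1 + δ)/(1 - δ))^t`, whose
logarithm is at least `2tδ = 2(2√3 - √6)ε` (the odd series of `artanh` has nonnegative terms),
while `log((1 + ε)/(1 - ε)) ≤ 2ε/(1 - ε)`. As `2√3 - √6 ≈ 1.0146`, the second bound is smaller
once `ε < 1/150`.
-/

open Real

namespace Real

lemma two_mul_le_log_one_add_sub_log_one_sub {x : ℝ} (hx0 : 0 ≤ x) (hx1 : x < 1) :
    2 * x ≤ log (1 + x) - log (1 - x) := by
  have hsum := hasSum_log_sub_log_of_abs_lt_one (abs_lt.mpr ⟨by linarith, hx1⟩)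
  simpa using le_hasSum hsum 0 fun k _ => by positivity

lemma log_one_add_sub_log_one_sub_le {x : ℝ} (hx0 : 0 ≤ x) (hx1 : x < 1) :
    log (1 + x) - log (1 - x) ≤ 2 * x / (1 - x) := by
  have hpos : 0 < 1 - x := by linarith
  rw [← log_div (by linarith) hpos.ne']
  calc log ((1 + x) / (1 - x)) ≤ (1 + x) / (1 - x) - 1 := log_le_sub_one_of_pos (by positivity)
    _ = 2 * x / (1 - x) := by field_simp; ring

lemma one_add_div_one_sub_lt_rpow {ε δ t : ℝ} (hε0 : 0 ≤ ε) (hε1 : ε < 1) (hδ0 : 0 ≤ δ)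
    (hδ1 : δ < 1) (ht : 0 ≤ t) (h : ε / (1 - ε) < t * δ) :
    (1 + ε) / (1 - ε) < ((1 + δ) / (1 - δ)) ^ t := by
  have hεpos : 0 < 1 - ε := by linarith
  have hδpos : 0 < 1 - δ := by linarith
  rw [← exp_log (by positivity : 0 < (1 + ε) / (1 - ε)),
    ← exp_log (by positivity : 0 < ((1 + δ) / (1 - δ)) ^ t), exp_lt_exp,
    log_rpow (by positivity), log_div (by linarith) hεpos.ne', log_div (by linarith) hδpos.ne']
  calc log (1 + ε) - log (1 - ε) ≤ 2 * ε / (1 - ε) := log_one_add_sub_log_one_sub_le hε0 hε1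
    _ = 2 * (ε / (1 - ε)) := by ring
    _ < t * (2 * δ) := by linarith
    _ ≤ t * (log (1 + δ) - log (1 - δ)) :=
      mul_le_mul_of_nonneg_left (two_mul_le_log_one_add_sub_log_one_sub hδ0 hδ1) ht

lemma rpow_add_mul_rpow_sub_add {x y : ℝ} (hx : 0 < x) (hy : 0 < y) (n k t : ℝ) :
    x ^ (k + t) * y ^ (n - (k + t)) = x ^ k * y ^ (n - k) * (x / y) ^ t := by
  rw [rpow_add hx, show n - (k + t) = (n - k) - t by ring, rpow_sub hy,
    div_rpow hx.le hy.le]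
  field_simp

end Real

lemma sqrt_six_sub_sqrt_three_mul_sqrt_two :
    (√6 - √3) * √2 = 2 * √3 - √6 := by
  have h6 : √6 = √2 * √3 := by rw [← sqrt_mul zero_le_two]; norm_num
  have h2 : √2 * √2 = 2 := mul_self_sqrt zero_le_two
  rw [h6]
  linear_combination √3 * h2

lemma div_one_sub_lt_mul_two_sqrt_three_sub_sqrt_six {ε : ℝ} (hε0 : 0 < ε) (hε1 : ε < 1 / 150) :
    ε / (1 - ε) < (2 * √3 - √6) * ε := by
  have s3 : (1.732 : ℝ) < √3 := (lt_sqrt (by norm_num)).mpr (by norm_num)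
  have s6 : √6 < 2.4495 := (sqrt_lt' (by norm_num)).mpr (by norm_num)
  have hc : 1 < (2 * √3 - √6) * (1 - ε) := by nlinarith
  rw [div_lt_iff₀ (by linarith)]
  nlinarith

/-- With `δ = √2·ε/√n`, `k_H = n/2 - √3·√n`, `k_L = n/2 - √6·√n`,
    `p_H = 2⁻ⁿ(1+δ)^{k_H}(1-δ)^{n-k_H}` and `p_L = 2⁻ⁿ(1+δ)^{k_L}(1-δ)^{n-k_L}`
    (real powers), it holds that `(1-ε)p_H > (1+ε)p_L` for `n ≥ 1`, `0 < ε < 1/150`. -/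
theorem pH_pL_separation (n : ℕ) (ε : ℝ) (hn : 1 ≤ n) (hε0 : 0 < ε) (hε1 : ε < 1/150) :
    let δ : ℝ := Real.sqrt 2 * ε / Real.sqrt n
    let kH : ℝ := (n : ℝ) / 2 - Real.sqrt 3 * Real.sqrt n
    let kL : ℝ := (n : ℝ) / 2 - Real.sqrt 6 * Real.sqrt n
    let pH : ℝ := (2 : ℝ) ^ (-(n : ℝ)) * (1 + δ) ^ kH * (1 - δ) ^ ((n : ℝ) - kH)
    let pL : ℝ := (2 : ℝ) ^ (-(n : ℝ)) * (1 + δ) ^ kL * (1 - δ) ^ ((n : ℝ) - kL)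
    (1 - ε) * pH > (1 + ε) * pL := by
  intro δ kH kL pH pL
  have hsqrt_n : 1 ≤ √(n : ℝ) := one_le_sqrt.mpr (by exact_mod_cast hn)
  have hδ0 : 0 ≤ δ := by positivity
  have hδ1 : δ < 1 := by
    have : √2 < 2 := (sqrt_lt' two_pos).mpr (by norm_num)
    rw [div_lt_one (by positivity)]
    nlinarith
  set t := (√6 - √3) * √(n : ℝ)
  have ht : 0 ≤ t := mul_nonneg (sub_nonneg.mpr (sqrt_le_sqrt (by norm_num))) (sqrt_nonneg _)
  have htδ : t * δ = (2 * √3 - √6) * ε := by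
    simp only [t, δ, ← sqrt_six_sub_sqrt_three_mul_sqrt_two]
    field_simp
  have hδpos : 0 < 1 - δ := by linarith
  have hkH : kH = kL + t := by simp only [kH, kL, t]; ring
  have hpH : pH = pL * ((1 + δ) / (1 - δ)) ^ t := by
    simp only [pH, pL, hkH, mul_assoc, rpow_add_mul_rpow_sub_add (by linarith : 0 < 1 + δ) hδpos]
  have hpL : 0 < pL := by positivity
  have hodds := one_add_div_one_sub_lt_rpow hε0.le (by linarith) hδ0 hδ1 ht
    (htδ ▸ div_one_sub_lt_mul_two_sqrt_three_sub_sqrt_six hε0 hε1)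
  rw [div_lt_iff₀ (by linarith)] at hodds
  calc (1 + ε) * pL < ((1 + δ) / (1 - δ)) ^ t * (1 - ε) * pL := mul_lt_mul_of_pos_right hodds hpL
    _ = (1 - ε) * pH := by rw [hpH]; ring
end

section
/- Let 0 < δ < 1/3 and 0 ≤ r < 1/2. For each i, let τ₋^{(i)} = Bin(m_i, (1-δ)/2), τ₊^{(i)} = Bin(m_i, (1+δ)/2), μ^{(i)} = (1/2)τ₋^{(i)} + (1/2)τ₊^{(i)}, and ν^{(i)} = ((1+r)/2)τ₋^{(i)} + ((1-r)/2)τ₊^{(i)}. Then D_KL( ∏_{i=1}^n μ^{(i)} ‖ ∏_{i=1}^n ν^{(i)} ) ≤ 5·r²·δ²·q, where q = Σ_{i=1}^n m_i. -/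
/-- The probability mass function of the binomial distribution `Bin(m,p)`. -/
def binomPMF (m : ℕ) (p : ℝ) (k : ℕ) : ℝ := (m.choose k : ℝ) * p ^ k * (1 - p) ^ (m - k)

/-!
Both mixtures are built from `a = Bin(m, (1-δ)/2)` and `b = Bin(m, (1+δ)/2)`. KL divergence
tensorizes, and on each coordinate it is at most the χ²-divergence. Pointwise `μ - ν = r(b-a)/2`
and `ν ≥ (a+b)/4`, so `χ²(μ‖ν) ≤ r² Σ (a-b)²/(a+b) ≤ 2r² Σ (√a-√b)²`. The Hellinger affinity of
two binomials is multiplicative, `Σ √(ab) = (1-δ²)^(m/2)`, and Bernoulli's inequality bounds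
`Σ (√a-√b)² = 2 - 2(1-δ²)^(m/2)` by `(4/3)δ²m`. This gives `(8/3)r²δ²m` nats per coordinate, and
`8/3 < 5 log 2` converts to bits.
-/

open Finset Real

section Divergence

variable {α : Type*} [Fintype α]

noncomputable def discreteKL (p q : α → ℝ) : ℝ := ∑ x, p x * log (p x / q x)

noncomputable def discreteChiSq (p q : α → ℝ) : ℝ := ∑ x, (p x - q x) ^ 2 / q x

lemma mul_log_div_le {a b : ℝ} (ha : 0 ≤ a) (hb : 0 < b) :
    a * log (a / b) ≤ (a - b) ^ 2 / b + (a - b) := by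
  rcases ha.eq_or_lt with rfl | ha
  · simp [sq, hb.ne']
  calc a * log (a / b) ≤ a * (a / b - 1) :=
        mul_le_mul_of_nonneg_left (log_le_sub_one_of_pos (by positivity)) ha.le
    _ = (a - b) ^ 2 / b + (a - b) := by field_simp; ring

theorem discreteKL_le_discreteChiSq {p q : α → ℝ} (hp : ∀ x, 0 ≤ p x) (hq : ∀ x, 0 < q x)
    (hpq : ∑ x, p x = ∑ x, q x) : discreteKL p q ≤ discreteChiSq p q := by
  calc discreteKL p q ≤ ∑ x, ((p x - q x) ^ 2 / q x + (p x - q x)) :=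
        sum_le_sum fun x _ => mul_log_div_le (hp x) (hq x)
    _ = discreteChiSq p q := by
        rw [sum_add_distrib, sum_sub_distrib, hpq, sub_self, add_zero, discreteChiSq]

lemma sum_prod_mul_apply {R ι : Type*} [CommSemiring R] [Fintype ι] [DecidableEq ι]
    {κ : ι → Type*} [∀ i, Fintype (κ i)] (f : ∀ i, κ i → R) (hf : ∀ i, ∑ k, f i k = 1)
    (g : ∀ i, κ i → R) (i : ι) :
    ∑ x : ∀ j, κ j, (∏ j, f j (x j)) * g i (x i) = ∑ k, f i k * g i k := by
  set G : ∀ j, κ j → R := Function.update (fun _ _ => 1) i (g i)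
  have hG (x : ∀ j, κ j) : g i (x i) = ∏ j, G j (x j) := by
    simp only [G, Function.apply_update (fun j (φ : κ j → R) => φ (x j)),
      prod_update_of_mem (mem_univ i), prod_const_one, mul_one]
  have hsum (j : ι) : ∑ k, f j k * G j k
      = Function.update (fun _ => (1 : R)) i (∑ k, f i k * g i k) j := by
    rcases eq_or_ne j i with rfl | hj
    · simp [G]
    · simp [G, hj, hf]
  calc ∑ x : ∀ j, κ j, (∏ j, f j (x j)) * g i (x i)
      = ∑ x : ∀ j, κ j, ∏ j, f j (x j) * G j (x j) := by simp only [hG, prod_mul_distrib]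
    _ = ∏ j, ∑ k, f j k * G j k := (Fintype.prod_sum fun j k => f j k * G j k).symm
    _ = ∑ k, f i k * g i k := by
      simp only [hsum, prod_update_of_mem (mem_univ i), prod_const_one, mul_one]

theorem discreteKL_pi {ι : Type*} [Fintype ι] [DecidableEq ι] {κ : ι → Type*}
    [∀ i, Fintype (κ i)] {p q : ∀ i, κ i → ℝ} (hp : ∀ i k, 0 < p i k) (hq : ∀ i k, 0 < q i k)
    (hp₁ : ∀ i, ∑ k, p i k = 1) :
    discreteKL (fun x : ∀ i, κ i => ∏ i, p i (x i)) (fun x => ∏ i, q i (x i))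
      = ∑ i, discreteKL (p i) (q i) := by
  have hlog (x : ∀ i, κ i) :
      log ((∏ i, p i (x i)) / ∏ i, q i (x i)) = ∑ i, log (p i (x i) / q i (x i)) := by
    rw [← prod_div_distrib, log_prod fun i _ => (div_pos (hp i (x i)) (hq i (x i))).ne']
  simp only [discreteKL, hlog, mul_sum]
  rw [sum_comm]
  exact sum_congr rfl fun i _ => sum_prod_mul_apply p hp₁ (fun i k => log (p i k / q i k)) i

lemma sq_sub_le_two_mul_add_mul_sq_sqrt_sub {a b : ℝ} (ha : 0 ≤ a) (hb : 0 ≤ b) :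
    (a - b) ^ 2 ≤ 2 * (a + b) * (√a - √b) ^ 2 := by
  have hsa := sq_sqrt ha
  have hsb := sq_sqrt hb
  have hdiff : a - b = (√a - √b) * (√a + √b) := by linear_combination hsb - hsa
  rw [hdiff, mul_pow, mul_comm]
  exact mul_le_mul_of_nonneg_right (by nlinarith [sq_nonneg (√a - √b)]) (sq_nonneg _)

theorem discreteChiSq_mixture_le {a b : α → ℝ} (ha : ∀ x, 0 ≤ a x) (hb : ∀ x, 0 ≤ b x)
    {r : ℝ} (hr : |r| ≤ 1/2) :
    discreteChiSq (fun x => 1/2 * a x + 1/2 * b x) (fun x => (1 + r)/2 * a x + (1 - r)/2 * b x)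
      ≤ 2 * r ^ 2 * ∑ x, (√(a x) - √(b x)) ^ 2 := by
  obtain ⟨hr₀, hr₁⟩ := abs_le.mp hr
  rw [mul_sum]
  refine sum_le_sum fun x _ => ?_
  have ha := ha x
  have hb := hb x
  rcases (add_nonneg ha hb).eq_or_lt with hab | hab
  · have ha0 : a x = 0 := by linarith
    have hb0 : b x = 0 := by linarith
    simp [ha0, hb0]
  -- `|r| ≤ 1/2` keeps `ν` above half of `μ`
  have hν : (a x + b x) / 4 ≤ (1 + r)/2 * a x + (1 - r)/2 * b x := by nlinarith
  calc (1/2 * a x + 1/2 * b x - ((1 + r)/2 * a x + (1 - r)/2 * b x)) ^ 2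
        / ((1 + r)/2 * a x + (1 - r)/2 * b x)
      ≤ (r * (a x - b x) / 2) ^ 2 / ((a x + b x) / 4) := by
        rw [show 1/2 * a x + 1/2 * b x - ((1 + r)/2 * a x + (1 - r)/2 * b x)
          = - (r * (a x - b x) / 2) by ring, neg_sq]
        exact div_le_div_of_nonneg_left (sq_nonneg _) (by positivity) hν
    _ = r ^ 2 * ((a x - b x) ^ 2 / (a x + b x)) := by field_simp; ring
    _ ≤ r ^ 2 * (2 * (√(a x) - √(b x)) ^ 2) := by
        gcongr
        rw [div_le_iff₀ hab]
        linarith [sq_sub_le_two_mul_add_mul_sq_sqrt_sub ha hb]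
    _ = 2 * r ^ 2 * (√(a x) - √(b x)) ^ 2 := by ring

end Divergence

lemma binomPMF_pos {m k : ℕ} {p : ℝ} (hp₀ : 0 < p) (hp₁ : p < 1) (hk : k ≤ m) :
    0 < binomPMF m p k := by
  have : 0 < (m.choose k : ℝ) := mod_cast Nat.choose_pos hk
  have : 0 < 1 - p := sub_pos.mpr hp₁
  unfold binomPMF
  positivity

lemma binomPMF_nonneg {m k : ℕ} {p : ℝ} (hp₀ : 0 ≤ p) (hp₁ : p ≤ 1) : 0 ≤ binomPMF m p k := by
  have : 0 ≤ 1 - p := sub_nonneg.mpr hp₁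
  unfold binomPMF
  positivity

lemma sum_binomPMF (m : ℕ) (p : ℝ) : ∑ k : Fin (m + 1), binomPMF m p k = 1 := by
  have h := (add_pow p (1 - p) m).symm
  rw [add_sub_cancel, one_pow] at h
  rw [Fin.sum_univ_eq_sum_range (binomPMF m p), ← h]
  exact sum_congr rfl fun k _ => by simp only [binomPMF]; ring

lemma sum_sqrt_binomPMF_mul (m : ℕ) {p q : ℝ} (hp₀ : 0 ≤ p) (hp₁ : p ≤ 1) (hq₀ : 0 ≤ q)
    (hq₁ : q ≤ 1) :
    ∑ k : Fin (m + 1), √(binomPMF m p k * binomPMF m q k)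
      = (√(p * q) + √((1 - p) * (1 - q))) ^ m := by
  have hpq : √(p * q) ^ 2 = p * q := sq_sqrt (by positivity)
  have hpq' : √((1 - p) * (1 - q)) ^ 2 = (1 - p) * (1 - q) :=
    sq_sqrt (mul_nonneg (sub_nonneg.mpr hp₁) (sub_nonneg.mpr hq₁))
  have hterm (k : ℕ) : binomPMF m p k * binomPMF m q k
      = ((m.choose k : ℝ) * √(p * q) ^ k * √((1 - p) * (1 - q)) ^ (m - k)) ^ 2 := by
    rw [show ∀ c x y : ℝ, (c * x ^ k * y ^ (m - k)) ^ 2 = c ^ 2 * (x ^ 2) ^ k * (y ^ 2) ^ (m - k)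
      from fun _ _ _ => by ring, hpq, hpq']
    simp only [binomPMF, mul_pow]
    ring
  rw [add_pow, ← Fin.sum_univ_eq_sum_range]
  refine sum_congr rfl fun k _ => ?_
  rw [hterm, sqrt_sq (by positivity)]
  ring

lemma sum_binomPMF_mixture (m : ℕ) (p q w₁ w₂ : ℝ) :
    ∑ k : Fin (m + 1), (w₁ * binomPMF m p k + w₂ * binomPMF m q k) = w₁ + w₂ := by
  rw [sum_add_distrib, ← mul_sum, ← mul_sum, sum_binomPMF, sum_binomPMF, mul_one, mul_one]

lemma binomPMF_mixture_pos {m k : ℕ} {δ w₁ w₂ : ℝ} (hδ : |δ| < 1) (hk : k ≤ m) (hw₁ : 0 ≤ w₁)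
    (hw₂ : 0 ≤ w₂) (hw : 0 < w₁ + w₂) :
    0 < w₁ * binomPMF m ((1 - δ)/2) k + w₂ * binomPMF m ((1 + δ)/2) k := by
  obtain ⟨hδ₀, hδ₁⟩ := abs_lt.mp hδ
  have ha : 0 < binomPMF m ((1 - δ)/2) k := binomPMF_pos (by linarith) (by linarith) hk
  have hb : 0 < binomPMF m ((1 + δ)/2) k := binomPMF_pos (by linarith) (by linarith) hk
  rcases hw₁.eq_or_lt with rfl | hw₁
  · simp only [zero_add] at hw; positivity
  · positivity

lemma sum_sq_sqrt_sub_binomPMF (m : ℕ) {δ : ℝ} (hδ : |δ| ≤ 1) :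
    ∑ k : Fin (m + 1), (√(binomPMF m ((1 - δ)/2) k) - √(binomPMF m ((1 + δ)/2) k)) ^ 2
      = 2 - 2 * √(1 - δ ^ 2) ^ m := by
  obtain ⟨hδ₀, hδ₁⟩ := abs_le.mp hδ
  have hsq (k : ℕ) : (√(binomPMF m ((1 - δ)/2) k) - √(binomPMF m ((1 + δ)/2) k)) ^ 2
      = binomPMF m ((1 - δ)/2) k + binomPMF m ((1 + δ)/2) k
        - 2 * √(binomPMF m ((1 - δ)/2) k * binomPMF m ((1 + δ)/2) k) := by
    have ha : 0 ≤ binomPMF m ((1 - δ)/2) k := binomPMF_nonneg (by linarith) (by linarith)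
    have hb : 0 ≤ binomPMF m ((1 + δ)/2) k := binomPMF_nonneg (by linarith) (by linarith)
    rw [sub_sq, sq_sqrt ha, sq_sqrt hb, sqrt_mul ha]
    ring
  have haff :
      √((1 - δ)/2 * ((1 + δ)/2)) + √((1 - (1 - δ)/2) * (1 - (1 + δ)/2)) = √(1 - δ ^ 2) := by
    rw [show (1 - (1 - δ)/2) * (1 - (1 + δ)/2) = (1 - δ ^ 2) / 2 ^ 2 by ring,
      show (1 - δ)/2 * ((1 + δ)/2) = (1 - δ ^ 2) / 2 ^ 2 by ring, sqrt_div' _ (by positivity),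
      sqrt_sq zero_le_two]
    ring
  simp only [hsq, sum_sub_distrib, sum_add_distrib, sum_binomPMF, ← mul_sum]
  rw [sum_sqrt_binomPMF_mul m (by linarith) (by linarith) (by linarith) (by linarith), haff]
  ring

lemma one_sub_sqrt_one_sub_sq_pow_le (m : ℕ) {δ : ℝ} (hδ : δ ^ 2 ≤ 3/4) :
    1 - √(1 - δ ^ 2) ^ m ≤ 2/3 * δ ^ 2 * m := by
  set s := √(1 - δ ^ 2)
  have hs : s ^ 2 = 1 - δ ^ 2 := sq_sqrt (by nlinarith)
  have hs₀ : 0 ≤ s := sqrt_nonneg _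
  have hbernoulli : 1 + m * (s - 1) ≤ s ^ m := one_add_mul_sub_le_pow (by linarith) m
  -- `1 - s = δ² / (1 + s)` and `s ≥ 1/2`
  have hs_sub : 1 - s ≤ 2/3 * δ ^ 2 := by nlinarith
  nlinarith [(Nat.cast_nonneg m : (0 : ℝ) ≤ m)]

theorem discreteKL_binomial_mixture_le (m : ℕ) {δ r : ℝ} (hδ : δ ^ 2 ≤ 3/4) (hr : |r| ≤ 1/2) :
    discreteKL
        (fun k : Fin (m + 1) => 1/2 * binomPMF m ((1 - δ)/2) k + 1/2 * binomPMF m ((1 + δ)/2) k)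
        (fun k => (1 + r)/2 * binomPMF m ((1 - δ)/2) k + (1 - r)/2 * binomPMF m ((1 + δ)/2) k)
      ≤ 8/3 * r ^ 2 * δ ^ 2 * m := by
  have hδ_abs : |δ| < 1 := abs_lt.mpr ⟨by nlinarith, by nlinarith⟩
  obtain ⟨hδ₀, hδ₁⟩ := abs_lt.mp hδ_abs
  obtain ⟨hr₀, hr₁⟩ := abs_le.mp hr
  have hk (k : Fin (m + 1)) : (k : ℕ) ≤ m := Nat.lt_succ_iff.mp k.isLt
  calc _ ≤ discreteChiSq
        (fun k : Fin (m + 1) => 1/2 * binomPMF m ((1 - δ)/2) k + 1/2 * binomPMF m ((1 + δ)/2) k)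
        (fun k => (1 + r)/2 * binomPMF m ((1 - δ)/2) k + (1 - r)/2 * binomPMF m ((1 + δ)/2) k) :=
        discreteKL_le_discreteChiSq
          (fun k =>
            (binomPMF_mixture_pos hδ_abs (hk k) (by norm_num) (by norm_num) (by norm_num)).le)
          (fun k => binomPMF_mixture_pos hδ_abs (hk k) (by linarith) (by linarith) (by linarith))
          (by rw [sum_binomPMF_mixture, sum_binomPMF_mixture]; ring)
    _ ≤ 2 * r ^ 2 * (2 - 2 * √(1 - δ ^ 2) ^ m) := by
        rw [← sum_sq_sqrt_sub_binomPMF m hδ_abs.le]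
        exact discreteChiSq_mixture_le
          (fun _ => binomPMF_nonneg (by linarith) (by linarith))
          (fun _ => binomPMF_nonneg (by linarith) (by linarith)) hr
    _ ≤ 2 * r ^ 2 * (2 * (2/3 * δ ^ 2 * m)) := by
        gcongr
        linarith [one_sub_sqrt_one_sub_sq_pow_le m hδ]
    _ = 8/3 * r ^ 2 * δ ^ 2 * m := by ring

/-- For `μ⁽ⁱ⁾ = ½Bin(mᵢ,(1-δ)/2) + ½Bin(mᵢ,(1+δ)/2)` and
    `ν⁽ⁱ⁾ = (1+r)/2·Bin(mᵢ,(1-δ)/2) + (1-r)/2·Bin(mᵢ,(1+δ)/2)`, the KL divergence (in bits)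
    of the product distributions satisfies `D_KL(∏μ⁽ⁱ⁾ ‖ ∏ν⁽ⁱ⁾) ≤ 5r²δ²q`, `q = Σᵢ mᵢ`. -/
theorem dkl_product_mixture_le (n : ℕ) (m : Fin n → ℕ) (δ r : ℝ)
    (hδ0 : 0 < δ) (hδ1 : δ < 1/3) (hr0 : 0 ≤ r) (hr1 : r < 1/2) :
    let μ : (i : Fin n) → ℕ → ℝ := fun i k =>
      1/2 * binomPMF (m i) ((1 - δ)/2) k + 1/2 * binomPMF (m i) ((1 + δ)/2) k
    let ν : (i : Fin n) → ℕ → ℝ := fun i k =>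
      (1 + r)/2 * binomPMF (m i) ((1 - δ)/2) k + (1 - r)/2 * binomPMF (m i) ((1 + δ)/2) k
    ∑ x : (i : Fin n) → Fin (m i + 1),
        (∏ i, μ i (x i)) * Real.logb 2 ((∏ i, μ i (x i)) / (∏ i, ν i (x i)))
      ≤ 5 * r ^ 2 * δ ^ 2 * (∑ i, (m i : ℝ)) := by
  intro μ ν
  have hδ : δ ^ 2 ≤ 3/4 := by nlinarith
  have hδ_abs : |δ| < 1 := abs_lt.mpr ⟨by linarith, by linarith⟩
  have hr : |r| ≤ 1/2 := abs_le.mpr ⟨by linarith, hr1.le⟩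
  have hk {i : Fin n} (k : Fin (m i + 1)) : (k : ℕ) ≤ m i := Nat.lt_succ_iff.mp k.isLt
  have hμ (i : Fin n) (k : Fin (m i + 1)) : 0 < μ i k :=
    binomPMF_mixture_pos hδ_abs (hk k) (by norm_num) (by norm_num) (by norm_num)
  have hν (i : Fin n) (k : Fin (m i + 1)) : 0 < ν i k :=
    binomPMF_mixture_pos hδ_abs (hk k) (by linarith) (by linarith) (by linarith)
  have hμ₁ (i : Fin n) : ∑ k : Fin (m i + 1), μ i k = 1 := by
    simp only [μ, sum_binomPMF_mixture]
    norm_num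
  have hbits : ∑ x : (i : Fin n) → Fin (m i + 1),
        (∏ i, μ i (x i)) * logb 2 ((∏ i, μ i (x i)) / (∏ i, ν i (x i)))
      = discreteKL (fun x : (i : Fin n) → Fin (m i + 1) => ∏ i, μ i (x i))
          (fun x => ∏ i, ν i (x i)) / log 2 := by
    simp only [discreteKL, logb, sum_div, mul_div_assoc]
  have hlog2 : 8/15 < log 2 := by linarith [log_two_gt_d9]
  rw [hbits, discreteKL_pi hμ hν hμ₁, div_le_iff₀ (by linarith)]
  calc ∑ i, discreteKL (fun k : Fin (m i + 1) => μ i k) (fun k => ν i k)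
      ≤ ∑ i, 8/3 * r ^ 2 * δ ^ 2 * (m i : ℝ) :=
        sum_le_sum fun i _ => discreteKL_binomial_mixture_le (m i) hδ hr
    _ = 8/3 * (r ^ 2 * δ ^ 2 * ∑ i, (m i : ℝ)) := by simp only [← mul_sum]; ring
    _ ≤ 5 * r ^ 2 * δ ^ 2 * (∑ i, (m i : ℝ)) * log 2 := by
        have : 0 ≤ r ^ 2 * δ ^ 2 * ∑ i, (m i : ℝ) := by positivity
        nlinarith
end

section
/- Let μ′ be the distribution on {0,1}ⁿ whose bitwise conditional probability of sampling bit b at step i, given a prefix w of x, is (1-s_w·r)/2 when b makes the prefix extend x with s_w ∈ {±1}. If x has at most k_L = n/2 - √6√n indices with s = +1 along its path and r = 8/√n with n ≥ 3·10^{10}, then 2ⁿ·μ′(x) ≥ (1-r²)^{n/2} · exp(2r√6√n/(1+r)) > e^{7.19}. -/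
/-!
Both bounds come from `1 - y⁻¹ ≤ log y`, raised to a nonnegative real power. Writing
`(1 - r)^(a - c) (1 + r)^(a + c) = (1 - r²)^a ((1 + r)/(1 - r))^c`, it gives
`((1 + r)/(1 - r))^c ≥ exp (2rc/(1 + r))` and `(1 - r²)^a ≥ exp (-a r²/(1 - r²))`.
With `r = 8/√n`, `a = n/2` and `c = √6 √n` the exponents are `16√6/(1 + r)` and
`-32/(1 - r²)`, whose sum exceeds `7.19` once `√n ≥ 173205`.
-/

open Real

theorem exp_one_sub_inv_mul_le_rpow {y : ℝ} (hy : 0 < y) {c : ℝ} (hc : 0 ≤ c) :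
    exp ((1 - y⁻¹) * c) ≤ y ^ c := by
  rw [rpow_def_of_pos hy, exp_le_exp]
  exact mul_le_mul_of_nonneg_right (one_sub_inv_le_log_of_pos hy) hc

theorem exp_neg_mul_div_one_sub_le_one_sub_rpow {x : ℝ} (hx : x < 1) {a : ℝ} (ha : 0 ≤ a) :
    exp (-(a * x / (1 - x))) ≤ (1 - x) ^ a := by
  have hpos : 0 < 1 - x := by linarith
  convert exp_one_sub_inv_mul_le_rpow hpos ha using 2
  field_simp
  ring

theorem exp_two_mul_div_one_add_le_div_one_sub_rpow {r : ℝ} (hr₀ : -1 < r) (hr₁ : r < 1)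
    {c : ℝ} (hc : 0 ≤ c) : exp (2 * r * c / (1 + r)) ≤ ((1 + r) / (1 - r)) ^ c := by
  have hm : 0 < 1 - r := by linarith
  have hp : 0 < 1 + r := by linarith
  convert exp_one_sub_inv_mul_le_rpow (div_pos hp hm) hc using 2
  field_simp
  ring

theorem one_sub_rpow_sub_mul_one_add_rpow_add {r : ℝ} (hr₀ : -1 < r) (hr₁ : r < 1) (a c : ℝ) :
    (1 - r) ^ (a - c) * (1 + r) ^ (a + c) = (1 - r ^ 2) ^ a * ((1 + r) / (1 - r)) ^ c := by
  have hm : 0 < 1 - r := by linarith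
  have hp : 0 < 1 + r := by linarith
  rw [rpow_sub hm, rpow_add hp, div_rpow hp.le hm.le, show 1 - r ^ 2 = (1 - r) * (1 + r) by ring,
    mul_rpow hm.le hp.le]
  field_simp

theorem one_sub_sq_rpow_mul_exp_le_one_sub_rpow_mul_one_add_rpow {r : ℝ} (hr₀ : -1 < r)
    (hr₁ : r < 1) (a : ℝ) {c : ℝ} (hc : 0 ≤ c) :
    (1 - r ^ 2) ^ a * exp (2 * r * c / (1 + r)) ≤ (1 - r) ^ (a - c) * (1 + r) ^ (a + c) := by
  rw [one_sub_rpow_sub_mul_one_add_rpow_add hr₀ hr₁]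
  exact mul_le_mul_of_nonneg_left (exp_two_mul_div_one_add_le_div_one_sub_rpow hr₀ hr₁ hc)
    (rpow_nonneg (by nlinarith) _)

theorem seven_point_one_nine_lt_sixteen_sqrt_six_div_sub {r : ℝ} (hr₀ : 0 ≤ r) (hr : r ≤ 8 / 173205) :
    (7.19 : ℝ) < 16 * √6 / (1 + r) - 32 / (1 - r ^ 2) := by
  have hsqrt6 : (2.449489 : ℝ) ≤ √6 := by
    rw [le_sqrt (by norm_num) (by norm_num)]; norm_num
  have hfirst : 16 * 2.449489 * (1 - 8 / 173205) ≤ 16 * √6 / (1 + r) := by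
    rw [le_div_iff₀ (by linarith)]
    nlinarith
  have hsecond : 32 / (1 - r ^ 2) ≤ 32 / (1 - (8 / 173205) ^ 2) := by
    gcongr
  norm_num at hfirst hsecond ⊢
  linarith

/-- For `n ≥ 3·10¹⁰` and `r = 8/√n`:
    `(1-r)^{n/2-√6√n}·(1+r)^{n/2+√6√n} ≥ (1-r²)^{n/2}·exp(2r√6√n/(1+r)) > e^{7.19}`
    (real powers). -/
theorem mu_prime_mass_lower_bound (n : ℕ) (hn : 3 * 10 ^ 10 ≤ n) :
    let r : ℝ := 8 / Real.sqrt n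
    (1 - r) ^ ((n : ℝ)/2 - Real.sqrt 6 * Real.sqrt n) *
        (1 + r) ^ ((n : ℝ)/2 + Real.sqrt 6 * Real.sqrt n)
      ≥ (1 - r ^ 2) ^ ((n : ℝ)/2) * Real.exp (2 * r * Real.sqrt 6 * Real.sqrt n / (1 + r)) ∧
    (1 - r ^ 2) ^ ((n : ℝ)/2) * Real.exp (2 * r * Real.sqrt 6 * Real.sqrt n / (1 + r))
      > Real.exp 7.19 := by
  intro r
  have hsqrt : (173205 : ℝ) ≤ √n := by
    rw [le_sqrt (by norm_num) (by positivity)]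
    exact le_trans (by norm_num) (Nat.cast_le.mpr hn)
  have hr₀ : 0 < r := by positivity
  have hr : r ≤ 8 / 173205 := div_le_div_of_nonneg_left (by norm_num) (by norm_num) hsqrt
  have hrn : r * √n = 8 := div_mul_cancel₀ _ (by positivity)
  clear_value r
  have hexponent : 2 * r * √6 * √n = 16 * √6 := by linear_combination 2 * √6 * hrn
  have hnr : (n : ℝ) / 2 * r ^ 2 = 32 := by
    rw [← sq_sqrt (Nat.cast_nonneg n)]
    linear_combination (r * √n + 8) / 2 * hrn
  constructor
  · rw [show 2 * r * √6 * √n = 2 * r * (√6 * √n) by ring]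
    exact one_sub_sq_rpow_mul_exp_le_one_sub_rpow_mul_one_add_rpow (by linarith) (by linarith) _
      (by positivity)
  · calc exp 7.19 < exp (-(n / 2 * r ^ 2 / (1 - r ^ 2))) * exp (16 * √6 / (1 + r)) := by
          rw [← exp_add, exp_lt_exp, hnr]
          linarith [seven_point_one_nine_lt_sixteen_sqrt_six_div_sub hr₀.le hr]
      _ ≤ (1 - r ^ 2) ^ ((n : ℝ) / 2) * exp (2 * r * √6 * √n / (1 + r)) := by
          rw [hexponent]
          gcongr
          exact exp_neg_mul_div_one_sub_le_one_sub_rpow (by nlinarith) (by positivity)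
end
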